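/- arXiv:2311.14023 — 2 statements merged into one kernel-verified Lean document; each statement's English description precedes it below -/
import Mathlib

section
/- Let A and B be n×n real SPSD matrices, let 1 ≤ k < n and ε ≥ 0, and suppose that ‖A − B‖₂ ≤ (1+ε)‖A − A_(k)‖₂. Let r = rank(B). Then for every continuous operator monotone function f : [0,∞) → [0,∞), ‖f(A) − f(B)_(r)‖₂ ≤ (1+ε)‖f(A) − f(A)_(k)‖₂. -/
open Matrix BigOperators

/-- `M = U * diagonal μ * Uᵀ` is a spectral (eigen)decomposition of the symmetric matrix `M`,
with orthogonal `U` and eigenvalues `μ` listed in nonincreasing order. -/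
def IsSpectralDecomp {n : ℕ} (M U : Matrix (Fin n) (Fin n) ℝ) (μ : Fin n → ℝ) : Prop :=
  Uᵀ * U = 1 ∧ Antitone μ ∧ M = U * Matrix.diagonal μ * Uᵀ

/-- Truncation of a spectral decomposition to its `k` largest (first `k`) eigenvalues:
the best rank-`k` approximation `M_(k)` associated with the decomposition `(U, μ)`. -/
noncomputable def trunc {n : ℕ} (k : ℕ) (U : Matrix (Fin n) (Fin n) ℝ) (μ : Fin n → ℝ) :
    Matrix (Fin n) (Fin n) ℝ :=
  U * Matrix.diagonal (fun i : Fin n => if (i : ℕ) < k then μ i else 0) * Uᵀ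

/-- `f` is operator monotone on SPSD matrices: for all `m` and all `m × m` SPSD matrices
`B ⪰ C ⪰ 0`, one has `f(B) ⪰ f(C)`, where matrix functions are computed through (any)
spectral decomposition. -/
def OperatorMonotone (f : ℝ → ℝ) : Prop :=
  ∀ (m : ℕ) (B C U V : Matrix (Fin m) (Fin m) ℝ) (β γ : Fin m → ℝ),
    IsSpectralDecomp B U β → IsSpectralDecomp C V γ →
    B.PosSemidef → C.PosSemidef → (B - C).PosSemidef →
    (U * Matrix.diagonal (f ∘ β) * Uᵀ - V * Matrix.diagonal (f ∘ γ) * Vᵀ).PosSemidef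

/-- Squared Frobenius norm `‖M‖_F² = Σ_{i,j} M_{ij}²`. -/
noncomputable def frobSq {m l : ℕ} (M : Matrix (Fin m) (Fin l) ℝ) : ℝ :=
  ∑ i, ∑ j, (M i j) ^ 2

/-- Frobenius norm. -/
noncomputable def frobNorm {m l : ℕ} (M : Matrix (Fin m) (Fin l) ℝ) : ℝ :=
  Real.sqrt (frobSq M)

/-- The eigenvalues of a Hermitian matrix listed in nonincreasing order:
`eigsDesc hM i` is the `(i+1)`-st largest eigenvalue of `M`. -/
noncomputable def eigsDesc {m : ℕ} {M : Matrix (Fin m) (Fin m) ℝ} (hM : M.IsHermitian) :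
    Fin m → ℝ :=
  fun i => (hM.eigenvalues ∘ Tuple.sort hM.eigenvalues) i.rev

/-- The singular values of `M` in nonincreasing order: `svDesc M i` is the `(i+1)`-st largest
singular value of `M`, i.e. the square root of the `(i+1)`-st largest eigenvalue of `MᴴM`. -/
noncomputable def svDesc {m l : ℕ} (M : Matrix (Fin m) (Fin l) ℝ) : Fin l → ℝ :=
  fun i => Real.sqrt (eigsDesc (Matrix.isHermitian_conjTranspose_mul_self M) i)

/-- Nuclear norm: the sum of the singular values. -/
noncomputable def nuclearNorm {m l : ℕ} (M : Matrix (Fin m) (Fin l) ℝ) : ℝ :=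
  ∑ i, svDesc M i

/-- Operator (spectral) norm: the largest singular value. -/
noncomputable def opNorm {m l : ℕ} (M : Matrix (Fin m) (Fin l) ℝ) : ℝ :=
  ⨆ i, svDesc M i

/-- `p`-th power of the Schatten `p`-norm: `‖M‖_(p)^p = Σᵢ σᵢ(M)^p`. -/
noncomputable def schattenPow {m l : ℕ} (p : ℝ) (M : Matrix (Fin m) (Fin l) ℝ) : ℝ :=
  ∑ i, svDesc M i ^ p

/-- Schatten `p`-norm: `‖M‖_(p) = (Σᵢ σᵢ(M)^p)^(1/p)`. -/
noncomputable def schattenNorm {m l : ℕ} (p : ℝ) (M : Matrix (Fin m) (Fin l) ℝ) : ℝ :=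
  (schattenPow p M) ^ (1 / p)

/-- `P` is the orthogonal projection onto the column space of `M`. -/
def IsOrthProjOnto {m l : ℕ} (P : Matrix (Fin m) (Fin m) ℝ) (M : Matrix (Fin m) (Fin l) ℝ) :
    Prop :=
  Pᵀ = P ∧ P * P = P ∧ P * M = M ∧ ∃ Y : Matrix (Fin l) (Fin m) ℝ, P = M * Y

/-!
Put `σ = (1 + ε) μₖ`, where `μₖ = ‖A − A_(k)‖₂` is the `(k+1)`-st largest eigenvalue of `A`
(index `k` counts from `0`). The hypothesis gives `‖A − B‖₂ ≤ σ`, i.e. `A ⪯ B + σI` and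
`B ⪯ A + σI`, and operator monotonicity turns these into `f(A) ⪯ f(B + σI)` and
`f(B) ⪯ f(A + σI)`. Testing operator monotonicity on rotated `2 × 2` diagonal matrices shows that
`f` is concave on `[0, ∞)`; together with `f 0 ≥ 0` this gives `f(a + σ) ≤ f(a) + f(σ)` and
`f((1 + ε) a) ≤ (1 + ε) f(a)`. As the eigenvalues of `B` beyond the first `r` vanish,
`f(B + σI) ⪯ f(B)_(r) + f(σ) I`, and `f(B)_(r) ⪯ f(B)`. Hence
`−f(σ) I ⪯ f(A) − f(B)_(r) ⪯ f(σ) I`, so `‖f(A) − f(B)_(r)‖₂ ≤ f(σ) ≤ (1 + ε) f(μₖ)`, and `f(μₖ)`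
is an eigenvalue of `f(A) − f(A)_(k)`.
-/

open scoped MatrixOrder

section QuadraticForm

variable {n : ℕ}

lemma real_dotProduct_self_nonneg (x : Fin n → ℝ) : 0 ≤ x ⬝ᵥ x := by
  simpa using dotProduct_self_star_nonneg x

lemma dotProduct_mulVec_le_of_le {A B : Matrix (Fin n) (Fin n) ℝ} (h : A ≤ B) (x : Fin n → ℝ) :
    x ⬝ᵥ A *ᵥ x ≤ x ⬝ᵥ B *ᵥ x := by
  have := (Matrix.le_iff.mp h).dotProduct_mulVec_nonneg x
  rwa [star_trivial, sub_mulVec, dotProduct_sub, sub_nonneg] at this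

lemma le_of_dotProduct_mulVec_le {A B : Matrix (Fin n) (Fin n) ℝ} (hA : A.IsHermitian)
    (hB : B.IsHermitian) (h : ∀ x, x ⬝ᵥ A *ᵥ x ≤ x ⬝ᵥ B *ᵥ x) : A ≤ B :=
  Matrix.le_iff.mpr <| .of_dotProduct_mulVec_nonneg (hB.sub hA) fun x => by
    rw [star_trivial, sub_mulVec, dotProduct_sub, sub_nonneg]
    exact h x

end QuadraticForm

section ConjDiagonal

variable {n : ℕ}

lemma posSemidef_conj_diagonal (U : Matrix (Fin n) (Fin n) ℝ) {d : Fin n → ℝ}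
    (hd : ∀ i, 0 ≤ d i) : (U * diagonal d * Uᵀ).PosSemidef := by
  simpa [conjTranspose_eq_transpose_of_trivial] using
    (PosSemidef.diagonal hd).mul_mul_conjTranspose_same U

lemma conj_diagonal_sub (U : Matrix (Fin n) (Fin n) ℝ) (a b : Fin n → ℝ) :
    U * diagonal a * Uᵀ - U * diagonal b * Uᵀ = U * diagonal (fun i => a i - b i) * Uᵀ := by
  rw [← diagonal_sub, Matrix.mul_sub, Matrix.sub_mul]

lemma conj_diagonal_add (U : Matrix (Fin n) (Fin n) ℝ) (a b : Fin n → ℝ) :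
    U * diagonal a * Uᵀ + U * diagonal b * Uᵀ = U * diagonal (fun i => a i + b i) * Uᵀ := by
  rw [← diagonal_add, Matrix.mul_add, Matrix.add_mul]

lemma conj_diagonal_const {U : Matrix (Fin n) (Fin n) ℝ} (hU : U * Uᵀ = 1) (c : ℝ) :
    U * diagonal (fun _ => c) * Uᵀ = c • 1 := by
  rw [← smul_one_eq_diagonal, Matrix.mul_smul, Matrix.smul_mul, Matrix.mul_one, hU]

lemma conj_diagonal_mono (U : Matrix (Fin n) (Fin n) ℝ) {a b : Fin n → ℝ} (h : ∀ i, a i ≤ b i) :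
    U * diagonal a * Uᵀ ≤ U * diagonal b * Uᵀ := by
  rw [Matrix.le_iff, conj_diagonal_sub]
  exact posSemidef_conj_diagonal U fun i => sub_nonneg.mpr (h i)

lemma isHermitian_conj_diagonal (U : Matrix (Fin n) (Fin n) ℝ) (d : Fin n → ℝ) :
    (U * diagonal d * Uᵀ).IsHermitian := by
  simp [IsHermitian, conjTranspose_eq_transpose_of_trivial, Matrix.transpose_mul, Matrix.mul_assoc]

lemma dotProduct_conj_mulVec (U D : Matrix (Fin n) (Fin n) ℝ) (x : Fin n → ℝ) :
    x ⬝ᵥ (U * D * Uᵀ) *ᵥ x = Uᵀ *ᵥ x ⬝ᵥ D *ᵥ Uᵀ *ᵥ x := by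
  rw [← mulVec_mulVec, ← mulVec_mulVec, dotProduct_mulVec, ← mulVec_transpose]

lemma dotProduct_conj_diagonal_col {U : Matrix (Fin n) (Fin n) ℝ} (hU : Uᵀ * U = 1)
    (d : Fin n → ℝ) (i : Fin n) :
    U *ᵥ Pi.single i 1 ⬝ᵥ (U * diagonal d * Uᵀ) *ᵥ U *ᵥ Pi.single i 1 = d i := by
  rw [dotProduct_conj_mulVec, mulVec_mulVec, hU, one_mulVec]
  simp [mulVec_single]

lemma dotProduct_col_self {U : Matrix (Fin n) (Fin n) ℝ} (hU : Uᵀ * U = 1) (i : Fin n) :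
    U *ᵥ Pi.single i 1 ⬝ᵥ U *ᵥ Pi.single i 1 = 1 := by
  rw [dotProduct_mulVec, ← mulVec_transpose, mulVec_mulVec, hU, one_mulVec]
  simp

lemma Matrix.IsHermitian.exists_orthogonal_conj_diagonal {H : Matrix (Fin n) (Fin n) ℝ}
    (hH : H.IsHermitian) :
    ∃ V : Matrix (Fin n) (Fin n) ℝ, Vᵀ * V = 1 ∧ H = V * diagonal hH.eigenvalues * Vᵀ := by
  refine ⟨hH.eigenvectorUnitary, ?_, ?_⟩
  · rw [← conjTranspose_eq_transpose_of_trivial, ← star_eq_conjTranspose]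
    exact Unitary.star_mul_self_of_mem hH.eigenvectorUnitary.2
  · conv_lhs => rw [hH.spectral_theorem]
    rw [Unitary.conjStarAlgAut_apply, star_eq_conjTranspose, conjTranspose_eq_transpose_of_trivial]
    rfl

end ConjDiagonal

section OpNorm

variable {m l n : ℕ}

lemma opNorm_nonneg (M : Matrix (Fin m) (Fin l) ℝ) : 0 ≤ opNorm M :=
  Real.iSup_nonneg fun _ => Real.sqrt_nonneg _

lemma dotProduct_conjTranspose_mul_self_mulVec (M : Matrix (Fin m) (Fin l) ℝ) (x : Fin l → ℝ) :
    x ⬝ᵥ (Mᴴ * M) *ᵥ x = M *ᵥ x ⬝ᵥ M *ᵥ x := by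
  rw [conjTranspose_eq_transpose_of_trivial, ← mulVec_mulVec, dotProduct_mulVec, vecMul_transpose]

lemma eigenvalues_conjTranspose_mul_self_le_opNorm_sq (M : Matrix (Fin m) (Fin l) ℝ)
    (j : Fin l) : (isHermitian_conjTranspose_mul_self M).eigenvalues j ≤ opNorm M ^ 2 := by
  set hH := isHermitian_conjTranspose_mul_self M
  have hsv : svDesc M ((Tuple.sort hH.eigenvalues).symm j).rev = √(hH.eigenvalues j) := by
    simp [svDesc, eigsDesc]
  have hle : √(hH.eigenvalues j) ≤ opNorm M :=
    hsv ▸ le_ciSup (Set.finite_range (svDesc M)).bddAbove _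
  exact (Real.sqrt_le_iff.mp hle).2

lemma mulVec_dotProduct_le_opNorm_sq (M : Matrix (Fin m) (Fin l) ℝ) (x : Fin l → ℝ) :
    M *ᵥ x ⬝ᵥ M *ᵥ x ≤ opNorm M ^ 2 * (x ⬝ᵥ x) := by
  obtain ⟨V, hV, hMV⟩ := (isHermitian_conjTranspose_mul_self M).exists_orthogonal_conj_diagonal
  have hle : Mᴴ * M ≤ opNorm M ^ 2 • 1 := by
    rw [hMV, ← conj_diagonal_const (mul_eq_one_comm.mp hV)]
    exact conj_diagonal_mono V (eigenvalues_conjTranspose_mul_self_le_opNorm_sq M)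
  have := dotProduct_mulVec_le_of_le hle x
  rwa [dotProduct_conjTranspose_mul_self_mulVec, smul_mulVec, one_mulVec, dotProduct_smul,
    smul_eq_mul] at this

lemma opNorm_le_of_mulVec_dotProduct_le {M : Matrix (Fin m) (Fin l) ℝ} {c : ℝ} (hc : 0 ≤ c)
    (h : ∀ x, M *ᵥ x ⬝ᵥ M *ᵥ x ≤ c ^ 2 * (x ⬝ᵥ x)) : opNorm M ≤ c := by
  set hH := isHermitian_conjTranspose_mul_self M
  obtain ⟨V, hV, hMV⟩ := hH.exists_orthogonal_conj_diagonal
  refine Real.iSup_le (fun i => Real.sqrt_le_iff.mpr ⟨hc, ?_⟩) hc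
  show hH.eigenvalues (Tuple.sort hH.eigenvalues i.rev) ≤ c ^ 2
  rw [← dotProduct_conj_diagonal_col hV hH.eigenvalues, ← hMV, dotProduct_conjTranspose_mul_self_mulVec]
  simpa only [dotProduct_col_self hV, mul_one] using h (V *ᵥ Pi.single _ 1)

lemma abs_dotProduct_mulVec_le_opNorm (S : Matrix (Fin n) (Fin n) ℝ) (x : Fin n → ℝ) :
    |x ⬝ᵥ S *ᵥ x| ≤ opNorm S * (x ⬝ᵥ x) := by
  have hx := real_dotProduct_self_nonneg x
  refine abs_le_of_sq_le_sq ?_ (mul_nonneg (opNorm_nonneg S) hx)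
  calc (x ⬝ᵥ S *ᵥ x) ^ 2 ≤ (x ⬝ᵥ x) * (S *ᵥ x ⬝ᵥ S *ᵥ x) := by
        simpa [dotProduct, sq] using Finset.sum_mul_sq_le_sq_mul_sq Finset.univ x (S *ᵥ x)
    _ ≤ (x ⬝ᵥ x) * (opNorm S ^ 2 * (x ⬝ᵥ x)) :=
        mul_le_mul_of_nonneg_left (mulVec_dotProduct_le_opNorm_sq S x) hx
    _ = (opNorm S * (x ⬝ᵥ x)) ^ 2 := by ring

lemma mulVec_dotProduct_le_of_abs_dotProduct_mulVec_le {S : Matrix (Fin n) (Fin n) ℝ}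
    (hS : S.IsHermitian) {c : ℝ} (hc : 0 ≤ c) (h : ∀ x, |x ⬝ᵥ S *ᵥ x| ≤ c * (x ⬝ᵥ x))
    (x : Fin n → ℝ) : S *ᵥ x ⬝ᵥ S *ᵥ x ≤ c ^ 2 * (x ⬝ᵥ x) := by
  set y := S *ᵥ x
  have hxy : x ⬝ᵥ S *ᵥ y = y ⬝ᵥ y := by
    rw [dotProduct_mulVec, ← mulVec_transpose, ← conjTranspose_eq_transpose_of_trivial, hS]
  -- polarization: `4 t ⟪x, S y⟫ = q(x + t y) - q(x - t y)` for the quadratic form `q` of `S`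
  have key : ∀ t : ℝ, 2 * t * (y ⬝ᵥ y) ≤ c * (x ⬝ᵥ x + t ^ 2 * (y ⬝ᵥ y)) := by
    intro t
    have hplus := (abs_le.mp (h (x + t • y))).2
    have hminus := (abs_le.mp (h (x - t • y))).1
    simp only [mulVec_add, mulVec_sub, mulVec_smul, dotProduct_add, add_dotProduct,
      dotProduct_sub, sub_dotProduct, dotProduct_smul, smul_dotProduct, smul_eq_mul, hxy,
      dotProduct_comm y x] at hplus hminus
    nlinarith
  rcases hc.eq_or_lt with rfl | hc
  · nlinarith [key 1, real_dotProduct_self_nonneg y]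
  · have := key c⁻¹
    field_simp at this
    nlinarith

lemma opNorm_le_of_mem_Icc {S : Matrix (Fin n) (Fin n) ℝ} (hS : S.IsHermitian) {c : ℝ}
    (hc : 0 ≤ c) (h : S ∈ Set.Icc (-(c • 1)) (c • 1)) : opNorm S ≤ c := by
  refine opNorm_le_of_mulVec_dotProduct_le hc <|
    mulVec_dotProduct_le_of_abs_dotProduct_mulVec_le hS hc fun x => abs_le.mpr ⟨?_, ?_⟩
  · simpa [smul_mulVec, neg_mulVec] using dotProduct_mulVec_le_of_le h.1 x
  · simpa [smul_mulVec] using dotProduct_mulVec_le_of_le h.2 x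

lemma mem_Icc_of_opNorm_le {S : Matrix (Fin n) (Fin n) ℝ} (hS : S.IsHermitian) {c : ℝ}
    (h : opNorm S ≤ c) : S ∈ Set.Icc (-(c • 1)) (c • 1) := by
  have hc : (c • 1 : Matrix (Fin n) (Fin n) ℝ).IsHermitian :=
    isHermitian_one.smul (IsSelfAdjoint.all c)
  have hq x : |x ⬝ᵥ S *ᵥ x| ≤ c * (x ⬝ᵥ x) := (abs_dotProduct_mulVec_le_opNorm S x).trans <|
    mul_le_mul_of_nonneg_right h (real_dotProduct_self_nonneg x)
  refine ⟨le_of_dotProduct_mulVec_le hc.neg hS fun x => ?_,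
    le_of_dotProduct_mulVec_le hS hc fun x => ?_⟩
  · simpa [smul_mulVec, neg_mulVec] using (abs_le.mp (hq x)).1
  · simpa [smul_mulVec] using (abs_le.mp (hq x)).2

end OpNorm

namespace IsSpectralDecomp

variable {n : ℕ} {M U : Matrix (Fin n) (Fin n) ℝ} {μ : Fin n → ℝ}

lemma mul_transpose (h : IsSpectralDecomp M U μ) : U * Uᵀ = 1 := mul_eq_one_comm.mp h.1

lemma nonneg (h : IsSpectralDecomp M U μ) (hM : M.PosSemidef) (i : Fin n) : 0 ≤ μ i := by
  have := hM.dotProduct_mulVec_nonneg (U *ᵥ Pi.single i 1)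
  rwa [star_trivial, h.2.2, dotProduct_conj_diagonal_col h.1] at this

lemma add_smul_one (h : IsSpectralDecomp M U μ) (c : ℝ) :
    IsSpectralDecomp (M + c • 1) U (fun i => μ i + c) :=
  ⟨h.1, fun _ _ hij => by simpa using h.2.1 hij, by
    rw [h.2.2, ← conj_diagonal_const h.mul_transpose c, conj_diagonal_add]⟩

lemma eq_zero_of_rank_le (h : IsSpectralDecomp M U μ) (hμ : ∀ i, 0 ≤ μ i) {i : Fin n}
    (hi : M.rank ≤ i) : μ i = 0 := by
  have hU : IsUnit U.det := by
    have := congrArg det h.1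
    rw [det_mul, det_transpose, det_one] at this
    exact IsUnit.of_mul_eq_one _ this
  have hrank : M.rank = Fintype.card {j // μ j ≠ 0} := by
    rw [h.2.2, rank_mul_eq_left_of_isUnit_det _ _ (by rwa [det_transpose]),
      rank_mul_eq_right_of_isUnit_det _ _ hU, rank_diagonal]
  by_contra hne
  -- `μ j ≥ μ i > 0` for every `j ≤ i`
  have hcard : (i : ℕ) + 1 ≤ Fintype.card {j // μ j ≠ 0} := by
    rw [Fintype.card_subtype, ← Fin.card_Iic]
    exact Finset.card_le_card fun j hj => Finset.mem_filter.mpr ⟨Finset.mem_univ j,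
      ((lt_of_le_of_ne (hμ i) (Ne.symm hne)).trans_le (h.2.1 (Finset.mem_Iic.mp hj))).ne'⟩
  omega

end IsSpectralDecomp

section Trunc

variable {n : ℕ}

lemma conj_diagonal_sub_trunc (U : Matrix (Fin n) (Fin n) ℝ) (d : Fin n → ℝ) (k : ℕ) :
    U * diagonal d * Uᵀ - trunc k U d =
      U * diagonal (fun i : Fin n => if (i : ℕ) < k then 0 else d i) * Uᵀ := by
  rw [trunc, conj_diagonal_sub]
  congr 3
  funext i
  split_ifs <;> ring

lemma IsSpectralDecomp.opNorm_sub_trunc_le {M U : Matrix (Fin n) (Fin n) ℝ} {μ : Fin n → ℝ}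
    (h : IsSpectralDecomp M U μ) (hμ : ∀ i, 0 ≤ μ i) {k : ℕ} (hk : k < n) :
    opNorm (M - trunc k U μ) ≤ μ ⟨k, hk⟩ := by
  rw [h.2.2, conj_diagonal_sub_trunc]
  have hbound (i : Fin n) : |if (i : ℕ) < k then 0 else μ i| ≤ μ ⟨k, hk⟩ := by
    split_ifs with hik
    · simpa using hμ _
    · rw [abs_of_nonneg (hμ i)]
      exact h.2.1 (Fin.le_def.mpr (not_lt.mp hik))
  refine opNorm_le_of_mem_Icc (isHermitian_conj_diagonal U _) (hμ _) ⟨?_, ?_⟩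
  · rw [← neg_smul, ← conj_diagonal_const h.mul_transpose]
    exact conj_diagonal_mono U fun i => (abs_le.mp (hbound i)).1
  · rw [← conj_diagonal_const h.mul_transpose]
    exact conj_diagonal_mono U fun i => (abs_le.mp (hbound i)).2

lemma le_opNorm_conj_diagonal_sub_trunc {U : Matrix (Fin n) (Fin n) ℝ} (hU : Uᵀ * U = 1)
    (d : Fin n → ℝ) {k : ℕ} (hk : k < n) :
    d ⟨k, hk⟩ ≤ opNorm (U * diagonal d * Uᵀ - trunc k U d) := by
  rw [conj_diagonal_sub_trunc]
  refine (le_abs_self _).trans ?_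
  have hq := abs_dotProduct_mulVec_le_opNorm
    (U * diagonal (fun i : Fin n => if (i : ℕ) < k then 0 else d i) * Uᵀ) (U *ᵥ Pi.single ⟨k, hk⟩ 1)
  rwa [dotProduct_col_self hU, mul_one, dotProduct_conj_diagonal_col hU, if_neg (lt_irrefl k)] at hq

end Trunc

section TwoByTwo

lemma rotation_mul_diagonal_mul_transpose (s s' p q : ℝ) :
    !![s, -s'; s', s] * diagonal ![p, q] * (!![s, -s'; s', s])ᵀ =
      !![s * s * p + s' * s' * q, s * s' * (p - q); s * s' * (p - q), s' * s' * p + s * s * q] := by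
  ext i j
  fin_cases i <;> fin_cases j <;>
    (simp [Matrix.mul_apply, Fin.sum_univ_two, diagonal, vecHead, vecTail]; ring)

lemma rotation_transpose_mul_self {s s' : ℝ} (h : s * s + s' * s' = 1) :
    (!![s, -s'; s', s])ᵀ * !![s, -s'; s', s] = 1 := by
  ext i j
  fin_cases i <;> fin_cases j <;> simp [Matrix.mul_apply, Fin.sum_univ_two, one_apply] <;> linarith

lemma posSemidef_of_sq_le_mul {a b c : ℝ} (hc : 0 < c) (h : b ^ 2 ≤ a * c) :
    (!![a, b; b, c]).PosSemidef := by
  refine .of_dotProduct_mulVec_nonneg ?_ fun z => ?_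
  · ext i j
    fin_cases i <;> fin_cases j <;> simp
  · have hq : star z ⬝ᵥ !![a, b; b, c] *ᵥ z = a * z 0 ^ 2 + 2 * b * z 0 * z 1 + c * z 1 ^ 2 := by
      simp [mulVec, dotProduct, Fin.sum_univ_two]
      ring
    rw [hq]
    -- `c q(z) = (b z₀ + c z₁)² + (ac - b²) z₀²`
    refine nonneg_of_mul_nonneg_right ?_ hc
    nlinarith [sq_nonneg (b * z 0 + c * z 1), mul_nonneg (sub_nonneg.mpr h) (sq_nonneg (z 0))]

end TwoByTwo

section OperatorMonotone

open Filter Topology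

variable {f : ℝ → ℝ}

lemma OperatorMonotone.le_of_le (hf : OperatorMonotone f) {n : ℕ}
    {B C U V : Matrix (Fin n) (Fin n) ℝ} {β γ : Fin n → ℝ} (hB : IsSpectralDecomp B U β)
    (hC : IsSpectralDecomp C V γ) (hC0 : C.PosSemidef) (hCB : C ≤ B) :
    V * diagonal (f ∘ γ) * Vᵀ ≤ U * diagonal (f ∘ β) * Uᵀ :=
  hf n B C U V β γ hB hC (by simpa using hC0.add hCB) hC0 hCB

/-- Rotate `diag(x, y)` so that its `(1, 1)` entry is `t x + (1 - t) y` and dominate the result by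
`diag(K, z)`; the `(1, 1)` entry of `f(diag(K, z)) - f(R diag(x, y) Rᵀ) ⪰ 0` is
`f z - (t f x + (1 - t) f y)`. -/
lemma OperatorMonotone.mul_add_mul_le (hf : OperatorMonotone f) {x y t z : ℝ} (hy : 0 ≤ y)
    (hyx : y ≤ x) (ht0 : 0 ≤ t) (ht1 : t ≤ 1) (hz : t * x + (1 - t) * y < z) :
    t * f x + (1 - t) * f y ≤ f z := by
  set s := √(1 - t)
  set s' := √t
  have hs : s * s = 1 - t := Real.mul_self_sqrt (by linarith)
  have hs' : s' * s' = t := Real.mul_self_sqrt ht0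
  set R : Matrix (Fin 2) (Fin 2) ℝ := !![s, -s'; s', s]
  set d := s * s' * (x - y)
  set m₀ := (1 - t) * x + t * y
  set δ := z - (t * x + (1 - t) * y)
  have hδ : 0 < δ := sub_pos.mpr hz
  have hm₀ : 0 ≤ m₀ := by nlinarith
  set K := m₀ + z + d ^ 2 / δ
  have hz0 : 0 ≤ z := by nlinarith
  have hzK : z ≤ K := by
    have := div_nonneg (sq_nonneg d) hδ.le
    simp only [K]
    linarith
  have hM : R * diagonal ![x, y] * Rᵀ = !![m₀, d; d, t * x + (1 - t) * y] := by
    rw [rotation_mul_diagonal_mul_transpose, hs, hs']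
  have hR : IsSpectralDecomp (R * diagonal ![x, y] * Rᵀ) R ![x, y] :=
    ⟨rotation_transpose_mul_self (by linarith), by simpa using hyx, rfl⟩
  have hY : IsSpectralDecomp (diagonal ![K, z]) 1 ![K, z] :=
    ⟨by simp, by simpa using hzK, by simp⟩
  have hle : R * diagonal ![x, y] * Rᵀ ≤ diagonal ![K, z] := by
    have hdiff : diagonal ![K, z] - !![m₀, d; d, t * x + (1 - t) * y] =
        !![z + d ^ 2 / δ, -d; -d, δ] := by
      ext i j
      fin_cases i <;> fin_cases j <;> simp [K, δ, add_assoc]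
    rw [hM, Matrix.le_iff, hdiff]
    refine posSemidef_of_sq_le_mul hδ ?_
    rw [add_mul, div_mul_cancel₀ _ hδ.ne']
    nlinarith
  have hM0 : (R * diagonal ![x, y] * Rᵀ).PosSemidef :=
    posSemidef_conj_diagonal R fun i => by fin_cases i <;> simp [hy, hy.trans hyx]
  have h11 := (Matrix.le_iff.mp (hf.le_of_le hY hR hM0 hle)).diag_nonneg (i := 1)
  have hfxy : f ∘ ![x, y] = ![f x, f y] := by
    ext i
    fin_cases i <;> rfl
  rw [hfxy, rotation_mul_diagonal_mul_transpose, hs, hs'] at h11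
  simp only [one_mul, transpose_one, mul_one, Matrix.sub_apply, diagonal_apply_eq,
    Function.comp_apply, cons_val_one, cons_val_fin_one, of_apply, cons_val', sub_nonneg] at h11
  linarith

lemma OperatorMonotone.concaveOn (hf : OperatorMonotone f) (hfc : ContinuousOn f (Set.Ici 0)) :
    ConcaveOn ℝ (Set.Ici 0) f := by
  have key {x y t : ℝ} (hy : 0 ≤ y) (hyx : y ≤ x) (ht0 : 0 ≤ t) (ht1 : t ≤ 1) :
      t * f x + (1 - t) * f y ≤ f (t * x + (1 - t) * y) := by
    have hm : 0 ≤ t * x + (1 - t) * y := by nlinarith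
    have hlim : Tendsto f (𝓝[>] (t * x + (1 - t) * y)) (𝓝 (f (t * x + (1 - t) * y))) :=
      ((hfc _ hm).mono fun w hw => hm.trans (le_of_lt hw)).tendsto
    exact ge_of_tendsto hlim (eventually_nhdsWithin_of_forall fun z hz =>
      hf.mul_add_mul_le hy hyx ht0 ht1 hz)
  refine ⟨convex_Ici 0, fun x hx y hy a b ha hb hab => ?_⟩
  obtain rfl : a = 1 - b := by linarith
  simp only [smul_eq_mul]
  rcases le_total y x with h | h
  · simpa [add_comm] using key (x := x) (y := y) hy h ha (by linarith)
  · have := key hx h hb (by linarith)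
    rwa [add_comm (b * f y), add_comm (b * y)] at this

end OperatorMonotone

section Concave

variable {f : ℝ → ℝ}

lemma ConcaveOn.mul_map_le_map_mul (hf : ConcaveOn ℝ (Set.Ici 0) f) (h0 : 0 ≤ f 0) {t x : ℝ}
    (hx : 0 ≤ x) (ht0 : 0 ≤ t) (ht1 : t ≤ 1) :
    t * f x ≤ f (t * x) := by
  have := hf.2 (Set.mem_Ici.mpr hx) (Set.mem_Ici.mpr le_rfl) ht0 (sub_nonneg.mpr ht1)
    (add_sub_cancel t 1)
  simp only [smul_eq_mul, mul_zero, add_zero] at this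
  nlinarith [mul_nonneg (sub_nonneg.mpr ht1) h0]

lemma ConcaveOn.map_add_le (hf : ConcaveOn ℝ (Set.Ici 0) f) (h0 : 0 ≤ f 0) {a b : ℝ}
    (ha : 0 ≤ a) (hb : 0 ≤ b) : f (a + b) ≤ f a + f b := by
  rcases (add_nonneg ha hb).eq_or_lt with hab | hab
  · obtain ⟨rfl, rfl⟩ : a = 0 ∧ b = 0 := ⟨by linarith, by linarith⟩
    simpa using h0
  · have hta := hf.mul_map_le_map_mul h0 hab.le (div_nonneg ha hab.le)
      (div_le_one_of_le₀ (by linarith) hab.le)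
    have htb := hf.mul_map_le_map_mul h0 hab.le (div_nonneg hb hab.le)
      (div_le_one_of_le₀ (by linarith) hab.le)
    rw [div_mul_cancel₀ _ hab.ne'] at hta htb
    calc f (a + b) = a / (a + b) * f (a + b) + b / (a + b) * f (a + b) := by
          field_simp
      _ ≤ f a + f b := add_le_add hta htb

lemma ConcaveOn.map_mul_le_mul (hf : ConcaveOn ℝ (Set.Ici 0) f) (h0 : 0 ≤ f 0) {c a : ℝ}
    (hc : 1 ≤ c) (ha : 0 ≤ a) : f (c * a) ≤ c * f a := by
  have hc0 : 0 < c := by linarith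
  have := hf.mul_map_le_map_mul h0 (mul_nonneg hc0.le ha) (inv_nonneg.mpr hc0.le)
    (inv_le_one_of_one_le₀ hc)
  rw [inv_mul_cancel_left₀ hc0.ne'] at this
  calc f (c * a) = c * (c⁻¹ * f (c * a)) := by field_simp
    _ ≤ c * f a := mul_le_mul_of_nonneg_left this hc0.le

end Concave

lemma opNorm_map_sub_trunc_rank_le {f : ℝ → ℝ} (hf : OperatorMonotone f)
    (hconc : ConcaveOn ℝ (Set.Ici 0) f) (hfnn : ∀ x, 0 ≤ x → 0 ≤ f x) {n : ℕ}
    {A B U W : Matrix (Fin n) (Fin n) ℝ} {μ β : Fin n → ℝ} (hA : A.PosSemidef)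
    (hB : B.PosSemidef) (hdecA : IsSpectralDecomp A U μ) (hdecB : IsSpectralDecomp B W β)
    {σ : ℝ} (hσ : 0 ≤ σ) (hAB : A ≤ B + σ • 1) (hBA : B ≤ A + σ • 1) :
    opNorm (U * diagonal (f ∘ μ) * Uᵀ - trunc B.rank W (f ∘ β)) ≤ f σ := by
  have hμ := hdecA.nonneg hA
  have hβ := hdecB.nonneg hB
  have hsub {a b : ℝ} (ha : 0 ≤ a) (hb : 0 ≤ b) := hconc.map_add_le (hfnn 0 le_rfl) ha hb
  have hfA : U * diagonal (f ∘ μ) * Uᵀ ≤ trunc B.rank W (f ∘ β) + f σ • 1 := by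
    refine (hf.le_of_le (hdecB.add_smul_one σ) hdecA hA hAB).trans ?_
    rw [trunc, ← conj_diagonal_const hdecB.mul_transpose, conj_diagonal_add]
    refine conj_diagonal_mono W fun i => ?_
    split_ifs with hi
    · exact hsub (hβ i) hσ
    · simp [hdecB.eq_zero_of_rank_le hβ (not_lt.mp hi)]
  have hfB : trunc B.rank W (f ∘ β) ≤ U * diagonal (f ∘ μ) * Uᵀ + f σ • 1 := by
    refine le_trans ?_ ((hf.le_of_le (hdecA.add_smul_one σ) hdecB hB hBA).trans ?_)
    · refine conj_diagonal_mono W fun i => ?_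
      split_ifs
      · exact le_rfl
      · exact hfnn _ (hβ i)
    · rw [← conj_diagonal_const hdecA.mul_transpose, conj_diagonal_add]
      exact conj_diagonal_mono U fun i => hsub (hμ i) hσ
  exact opNorm_le_of_mem_Icc ((isHermitian_conj_diagonal U _).sub (isHermitian_conj_diagonal W _))
    (hfnn σ hσ) ⟨neg_le_sub_iff_le_add.mpr hfB, sub_le_iff_le_add'.mpr hfA⟩

theorem opNorm_nystrom_to_funNystrom_general
    (n k : ℕ) (hkn : k < n) (ε : ℝ) (hε : 0 ≤ ε)
    (A B U W : Matrix (Fin n) (Fin n) ℝ) (μ β : Fin n → ℝ)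
    (hA : A.PosSemidef) (hB : B.PosSemidef)
    (hdecA : IsSpectralDecomp A U μ) (hdecB : IsSpectralDecomp B W β)
    (hnear : opNorm (A - B) ≤ (1 + ε) * opNorm (A - trunc k U μ))
    (r : ℕ) (hr : r = B.rank)
    (f : ℝ → ℝ) (hfc : ContinuousOn f (Set.Ici 0)) (hfmono : OperatorMonotone f)
    (hfnn : ∀ x : ℝ, 0 ≤ x → 0 ≤ f x) :
    opNorm (U * Matrix.diagonal (f ∘ μ) * Uᵀ - trunc r W (f ∘ β)) ≤
      (1 + ε) * opNorm (U * Matrix.diagonal (f ∘ μ) * Uᵀ - trunc k U (f ∘ μ)) := by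
  have hμ := hdecA.nonneg hA
  set σ := (1 + ε) * μ ⟨k, hkn⟩
  have hσ : 0 ≤ σ := mul_nonneg (by linarith) (hμ _)
  have hAB : A - B ∈ Set.Icc (-(σ • 1)) (σ • 1) := mem_Icc_of_opNorm_le (hA.1.sub hB.1) <|
    hnear.trans (mul_le_mul_of_nonneg_left (hdecA.opNorm_sub_trunc_le hμ hkn) (by linarith))
  have hconc := hfmono.concaveOn hfc
  calc opNorm (U * diagonal (f ∘ μ) * Uᵀ - trunc r W (f ∘ β))
      ≤ f σ := hr ▸ opNorm_map_sub_trunc_rank_le hfmono hconc hfnn hA hB hdecA hdecB hσ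
        (sub_le_iff_le_add'.mp hAB.2) (neg_le_sub_iff_le_add.mp hAB.1)
    _ ≤ (1 + ε) * f (μ ⟨k, hkn⟩) := hconc.map_mul_le_mul (hfnn 0 le_rfl) (by linarith) (hμ _)
    _ ≤ (1 + ε) * opNorm (U * diagonal (f ∘ μ) * Uᵀ - trunc k U (f ∘ μ)) :=
        mul_le_mul_of_nonneg_left (le_opNorm_conj_diagonal_sub_trunc hdecA.1 (f ∘ μ) hkn)
          (by linarith)

/-- Operator-norm transfer theorem: if `A, B ⪰ 0` and
`‖A − B‖₂ ≤ (1+ε)‖A − A_(k)‖₂`, then with `r = rank B`, for every continuous operator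
monotone `f : [0,∞) → [0,∞)`, `‖f(A) − f(B)_(r)‖₂ ≤ (1+ε)‖f(A) − f(A)_(k)‖₂`. -/
theorem opNorm_nystrom_to_funNystrom
    (n k : ℕ) (hk : 1 ≤ k) (hkn : k < n) (ε : ℝ) (hε : 0 ≤ ε)
    (A B U W : Matrix (Fin n) (Fin n) ℝ) (μ β : Fin n → ℝ)
    (hA : A.PosSemidef) (hB : B.PosSemidef)
    (hdecA : IsSpectralDecomp A U μ) (hdecB : IsSpectralDecomp B W β)
    (hnear : opNorm (A - B) ≤ (1 + ε) * opNorm (A - trunc k U μ))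
    (r : ℕ) (hr : r = B.rank)
    (f : ℝ → ℝ) (hfc : ContinuousOn f (Set.Ici 0)) (hfmono : OperatorMonotone f)
    (hfnn : ∀ x : ℝ, 0 ≤ x → 0 ≤ f x) :
    opNorm (U * Matrix.diagonal (f ∘ μ) * Uᵀ - trunc r W (f ∘ β)) ≤
      (1 + ε) * opNorm (U * Matrix.diagonal (f ∘ μ) * Uᵀ - trunc k U (f ∘ μ)) :=
  opNorm_nystrom_to_funNystrom_general n k hkn ε hε A B U W μ β hA hB hdecA hdecB hnear r hr f hfc
    hfmono hfnn
end

section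
/- Let A be an n×n real SPSD matrix, let Q ∈ ℝ^{n×ℓ}, and let 1 ≤ k < n. Then the minimum of ‖A − AQC‖_F over all matrices C ∈ ℝ^{ℓ×n} with rank(C) ≤ k is at most the minimum of ‖A − QC‖_F over all matrices C ∈ ℝ^{ℓ×n} with rank(C) ≤ k. In other words, the best Frobenius-norm rank-k approximation of A whose column space is constrained to lie in the column space of AQ is at least as accurate as the best one constrained to the column space of Q. -/
open Matrix BigOperators

/-! Let `P` and `W` be the orthogonal projections onto the column spaces of `B = Q C₂` and of
`A B`. Since `P B = B`, Pythagoras gives `‖A - P A‖ ≤ ‖A - B‖`, and it remains to show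
`‖P A‖ ≤ ‖W A‖`. As `A` is symmetric, `‖P A‖ = ‖A P‖`, and `A P = W A P` because the columns of
`A P` lie in those of `A B`; right multiplication by the projection `P` does not increase the
Frobenius norm. Finally `W A = A B Y A` for some `Y`, i.e. `W A = A Q C₁` with
`C₁ = C₂ Y A` of rank at most `rank C₂`. -/

section Frobenius

variable {m l : ℕ}

lemma frobSq_eq_trace (M : Matrix (Fin m) (Fin l) ℝ) : frobSq M = (Mᵀ * M).trace := by
  simp only [frobSq, trace, diag, mul_apply, transpose_apply, sq]
  exact Finset.sum_comm

lemma frobSq_nonneg (M : Matrix (Fin m) (Fin l) ℝ) : 0 ≤ frobSq M :=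
  Finset.sum_nonneg fun _ _ => Finset.sum_nonneg fun _ _ => sq_nonneg _

lemma frobSq_transpose (M : Matrix (Fin m) (Fin l) ℝ) : frobSq Mᵀ = frobSq M :=
  Finset.sum_comm

lemma frobSq_add_of_transpose_mul_eq_zero {X Y : Matrix (Fin m) (Fin l) ℝ} (h : Xᵀ * Y = 0) :
    frobSq (X + Y) = frobSq X + frobSq Y := by
  have h' : Yᵀ * X = 0 := by simpa using congrArg transpose h
  simp only [frobSq_eq_trace, transpose_add, Matrix.add_mul, Matrix.mul_add, h, h', trace_add,
    trace_zero]
  ring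

end Frobenius

section Projection

variable {m l : ℕ} {P : Matrix (Fin m) (Fin m) ℝ}

lemma transpose_sub_mul_mul_mul_eq_zero (hPt : Pᵀ = P) (hPP : P * P = P)
    (M N : Matrix (Fin m) (Fin l) ℝ) : (M - P * M)ᵀ * (P * N) = 0 := by
  rw [transpose_sub, transpose_mul, hPt, Matrix.sub_mul, Matrix.mul_assoc, ← Matrix.mul_assoc P P,
    hPP, sub_self]

lemma frobSq_sub_mul_add_frobSq_mul (hPt : Pᵀ = P) (hPP : P * P = P)
    (M : Matrix (Fin m) (Fin l) ℝ) : frobSq (M - P * M) + frobSq (P * M) = frobSq M := by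
  rw [← frobSq_add_of_transpose_mul_eq_zero (transpose_sub_mul_mul_mul_eq_zero hPt hPP M M),
    sub_add_cancel]

lemma frobSq_sub_mul_le (hPt : Pᵀ = P) (hPP : P * P = P) {B : Matrix (Fin m) (Fin l) ℝ}
    (hPB : P * B = B) (M : Matrix (Fin m) (Fin l) ℝ) : frobSq (M - P * M) ≤ frobSq (M - B) := by
  have hsplit : M - B = (M - P * M) + P * (M - B) := by rw [Matrix.mul_sub, hPB]; abel
  rw [hsplit, frobSq_add_of_transpose_mul_eq_zero
    (transpose_sub_mul_mul_mul_eq_zero hPt hPP M (M - B))]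
  exact le_add_of_nonneg_right (frobSq_nonneg _)

lemma frobSq_mul_le (hPt : Pᵀ = P) (hPP : P * P = P) (M : Matrix (Fin l) (Fin m) ℝ) :
    frobSq (M * P) ≤ frobSq M := by
  rw [← frobSq_transpose, transpose_mul, hPt, ← frobSq_transpose M,
    ← frobSq_sub_mul_add_frobSq_mul hPt hPP Mᵀ]
  exact le_add_of_nonneg_left (frobSq_nonneg _)

end Projection

open WithLp in
theorem exists_isOrthProjOnto {m l : ℕ} (M : Matrix (Fin m) (Fin l) ℝ) :
    ∃ P, IsOrthProjOnto P M := by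
  let V := LinearMap.range (Matrix.toEuclideanLin M)
  let P := (toEuclideanCLM (𝕜 := ℝ)).symm V.starProjection
  have hP : toEuclideanCLM (𝕜 := ℝ) P = V.starProjection := StarAlgEquiv.apply_symm_apply _ _
  have hPv (v : Fin m → ℝ) : P *ᵥ v = ofLp (V.starProjection (toLp 2 v)) := by
    rw [← hP]; rfl
  refine ⟨P, ?_, ?_, ?_, ?_⟩
  · rw [← conjTranspose_eq_transpose_of_trivial, ← star_eq_conjTranspose]
    apply EquivLike.injective (toEuclideanCLM (𝕜 := ℝ) (n := Fin m))
    rw [map_star, hP, (isSelfAdjoint_starProjection V).star_eq]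
  · apply EquivLike.injective (toEuclideanCLM (𝕜 := ℝ) (n := Fin m))
    rw [map_mul, hP, V.isIdempotentElem_starProjection.eq]
  · refine Matrix.toLin'.injective (LinearMap.ext fun x => ?_)
    simp only [Matrix.toLin'_apply, ← mulVec_mulVec, hPv]
    have hx : toLp 2 (M *ᵥ x) ∈ V := ⟨toLp 2 x, rfl⟩
    rw [V.starProjection_eq_self_iff.mpr hx]
  · have hcol (j : Fin m) : ∃ y : Fin l → ℝ, M *ᵥ y = P *ᵥ Pi.single j 1 := by
      obtain ⟨y, hy⟩ := V.starProjection_apply_mem (toLp 2 (Pi.single j 1))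
      exact ⟨ofLp y, by rw [hPv, ← hy]; rfl⟩
    choose Y hY using hcol
    refine ⟨(Matrix.of Y)ᵀ, Matrix.ext fun i j => ?_⟩
    have := congrFun (hY j) i
    rw [mulVec_single_one] at this
    simpa [Matrix.mul_apply, Matrix.mulVec, dotProduct] using this.symm

theorem frobSq_sub_mul_le_of_isOrthProjOnto {n : ℕ} {A B P W : Matrix (Fin n) (Fin n) ℝ}
    (hA : Aᵀ = A) (hP : IsOrthProjOnto P B) (hW : IsOrthProjOnto W (A * B)) :
    frobSq (A - W * A) ≤ frobSq (A - B) := by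
  obtain ⟨hPt, hPP, hPB, Y, rfl⟩ := hP
  obtain ⟨hWt, hWW, hWAB, -⟩ := hW
  set P := B * Y
  have hWAP : W * A * P = A * P := by
    simp only [P, ← Matrix.mul_assoc] at hWAB ⊢
    rw [hWAB]
  have hPA : frobSq (P * A) ≤ frobSq (W * A) := calc
    frobSq (P * A) = frobSq (A * P) := by rw [← frobSq_transpose, transpose_mul, hA, hPt]
    _ = frobSq (W * A * P) := by rw [hWAP]
    _ ≤ frobSq (W * A) := frobSq_mul_le hPt hPP _
  have hpythW := frobSq_sub_mul_add_frobSq_mul hWt hWW A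
  have hpythP := frobSq_sub_mul_add_frobSq_mul hPt hPP A
  linarith [frobSq_sub_mul_le hPt hPP hPB A]

theorem subspace_iteration_improves_general
    (n l k : ℕ)
    (A : Matrix (Fin n) (Fin n) ℝ) (hA : A.PosSemidef)
    (Q : Matrix (Fin n) (Fin l) ℝ) :
    ∀ C₂ : Matrix (Fin l) (Fin n) ℝ, C₂.rank ≤ k →
      ∃ C₁ : Matrix (Fin l) (Fin n) ℝ, C₁.rank ≤ k ∧
        frobNorm (A - A * Q * C₁) ≤ frobNorm (A - Q * C₂) := by
  intro C₂ hC₂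
  obtain ⟨P, hP⟩ := exists_isOrthProjOnto (Q * C₂)
  obtain ⟨W, hW⟩ := exists_isOrthProjOnto (A * (Q * C₂))
  obtain ⟨Y, hWY⟩ := hW.2.2.2
  refine ⟨C₂ * Y * A, (rank_mul_le_left _ _).trans ((rank_mul_le_left _ _).trans hC₂), ?_⟩
  have hAt : Aᵀ = A := by simpa using hA.isHermitian.eq
  have hC₁ : A * Q * (C₂ * Y * A) = W * A := by simp only [hWY, Matrix.mul_assoc]
  rw [hC₁]
  exact Real.sqrt_le_sqrt (frobSq_sub_mul_le_of_isOrthProjOnto hAt hP hW)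

/-- One step of subspace iteration cannot increase the Frobenius-norm
rank-`k` approximation error of a one-sided projection: for SPSD `A`, the minimum of
`‖A − AQC‖_F` over rank-`≤k` matrices `C` is at most the minimum of `‖A − QC‖_F` over
rank-`≤k` matrices `C`. -/
theorem subspace_iteration_improves
    (n l k : ℕ) (hk : 1 ≤ k) (hkn : k < n)
    (A : Matrix (Fin n) (Fin n) ℝ) (hA : A.PosSemidef)
    (Q : Matrix (Fin n) (Fin l) ℝ) :
    ∀ C₂ : Matrix (Fin l) (Fin n) ℝ, C₂.rank ≤ k →
      ∃ C₁ : Matrix (Fin l) (Fin n) ℝ, C₁.rank ≤ k ∧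
        frobNorm (A - A * Q * C₁) ≤ frobNorm (A - Q * C₂) :=
  subspace_iteration_improves_general n l k A hA Q
end
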